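/- arXiv:2311.01750 — 2 statements merged into one kernel-verified Lean document; each statement's English description precedes it below -/
import Mathlib

section
/- Let t ≥ 4 be an integer, set r = ⌈t/3⌉ and s = t². Let T be a copy of T^s, the complete tripartite 3-graph with parts V₁, V₂, V₃ each of size s, and for every i ∈ [3] let K_i be a copy of K̃_r with V(K_i) ⊆ V_i. Then the 3-graph T ∪ K₁ ∪ K₂ ∪ K₃ contains a copy of K̃_{3r}. -/
/-!
Split the branch vertices of `K̃_{3r}` into three blocks of `r` and send block `c` onto the
branch vertices of `K_c`. A pair inside block `c` keeps its apex in `K_c`. A pair across blocks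
`c ≠ d` gets as apex a fresh vertex of the third part `V_e` outside `K_e`, so its triple is an
edge of `T`. The cross pairs between two blocks need `r²` distinct fresh vertices in the third
part, and `t² ≥ v(K̃_r) + r²` leaves room for them.
-/

open Finset Filter

attribute [local instance] Classical.propDecidable

/-- A hypergraph: a finite vertex set and a finite edge set (edges are finite
vertex sets; for 3-graphs all edges have three elements). -/
structure H3 where
  verts : Finset ℕ
  edges : Finset (Finset ℕ)

/-- The subhypergraph relation. -/
def H3.Sub (F H : H3) : Prop :=
  F.verts ⊆ H.verts ∧ F.edges ⊆ H.edges ∧ ∀ e ∈ F.edges, e ⊆ F.verts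

/-- The density `d₃` of a 3-graph. -/
noncomputable def d3 (F : H3) : ℝ :=
  if F.edges.card = 0 then 0
  else if F.edges.card = 1 ∧ F.verts.card = 3 then 1 / 3
  else ((F.edges.card : ℝ) - 1) / ((F.verts.card : ℝ) - 3)

/-- The maximal 3-density `m₃`. -/
noncomputable def m3 (H : H3) : ℝ :=
  sSup {x : ℝ | ∃ F : H3, F.Sub H ∧ x = d3 F}

/-- The asymmetric maximal 3-density `m₃(H₁,H₂)`. -/
noncomputable def m3Asym (H1 H2 : H3) : ℝ :=
  sSup {x : ℝ | ∃ F : H3, F.Sub H1 ∧ 1 ≤ F.edges.card ∧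
    x = (F.edges.card : ℝ) / ((F.verts.card : ℝ) - 3 + 1 / m3 H2)}

/-- The maximum subhypergraph density `m(H)`. -/
noncomputable def mDen (H : H3) : ℝ :=
  sSup {x : ℝ | ∃ F : H3, F.Sub H ∧ 1 ≤ F.verts.card ∧
    x = (F.edges.card : ℝ) / (F.verts.card : ℝ)}

/-- The canonical linear 3-clique `K̃_t`: branch vertices `0,…,t-1`; the pair
`(i,j)` with `i<j<t` gets the apex vertex `t + (C(j,2) + i)`, and the map
`(i,j) ↦ C(j,2) + i` is a bijection onto `[0, C(t,2))`. -/
noncomputable def linClique (t : ℕ) : H3 where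
  verts := Finset.range (t + t.choose 2)
  edges := ((Finset.range t ×ˢ Finset.range t).filter fun p => p.1 < p.2).image
    fun p => {p.1, p.2, t + (p.2.choose 2 + p.1)}

/-- `v(K̃_t)`. -/
def vOf (t : ℕ) : ℕ := t + t.choose 2

/-- `(cV, cE)` is a copy of the hypergraph `F` (an isomorphic image of `F`). -/
def IsCopy3 (F : H3) (cV : Finset ℕ) (cE : Finset (Finset ℕ)) : Prop :=
  ∃ φ : ℕ → ℕ, Set.InjOn φ ↑F.verts ∧ cV = F.verts.image φ ∧
    cE = F.edges.image fun e => e.image φ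

/-- The edge set `E` contains a copy of the hypergraph `F`. -/
def ContainsCopy (F : H3) (E : Finset (Finset ℕ)) : Prop :=
  ∃ cV cE, IsCopy3 F cV cE ∧ cE ⊆ E

/-- The edge set `E` induced on `U` contains a copy of the hypergraph `F`. -/
def ContainsCopyWithin (F : H3) (E : Finset (Finset ℕ)) (U : Finset ℕ) : Prop :=
  ∃ cV cE, IsCopy3 F cV cE ∧ cV ⊆ U ∧ cE ⊆ E

/-- The probability that the binomial random 3-graph `ℍ(n,p)` satisfies `P`. -/
noncomputable def PrH (n : ℕ) (p : ℝ) (P : Finset (Finset ℕ) → Prop) : ℝ :=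
  ∑ R ∈ ((Finset.range n).powersetCard 3).powerset,
    if P R then p ^ R.card * (1 - p) ^ (((Finset.range n).powersetCard 3).card - R.card)
    else 0

/-- `E → (F)₂` : every 2-colouring of `E` yields a monochromatic copy of `F`. -/
def Arrow2 (E : Finset (Finset ℕ)) (F : H3) : Prop :=
  ∀ χ : Finset ℕ → Bool, ∃ c : Bool, ContainsCopy F (E.filter fun e => χ e = c)

/-- `E → (F, F')` : every red/blue colouring of `E` yields a red copy of `F`
or a blue copy of `F'`. -/
def ArrowAsym (E : Finset (Finset ℕ)) (F F' : H3) : Prop :=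
  ∀ χ : Finset ℕ → Bool,
    ContainsCopy F (E.filter fun e => χ e = true) ∨
    ContainsCopy F' (E.filter fun e => χ e = false)

/-- `H` is `(F,F')`-Ramsey with respect to `(𝓕,𝓕')`. -/
def RamseyWrt (E : Finset (Finset ℕ)) (F F' : H3) (𝓕 𝓕' : Finset (Finset ℕ)) : Prop :=
  ∀ χ : Finset ℕ → Bool,
    (∃ cV cE, IsCopy3 F cV cE ∧ cE ⊆ E.filter (fun e => χ e = true) ∧ cV ∉ 𝓕) ∨
    (∃ cV cE, IsCopy3 F' cV cE ∧ cE ⊆ E.filter (fun e => χ e = false) ∧ cV ∉ 𝓕')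

/-- The complete bipartite graph between `X` and `Y`, as a set of pairs. -/
noncomputable def K2 (X Y : Finset ℕ) : Finset (Finset ℕ) :=
  (X ×ˢ Y).image fun p => ({p.1, p.2} : Finset ℕ)

/-- `e_G(X,Y)` : the number of edges of `G` with one endpoint in `X` and one in `Y`. -/
noncomputable def e2 (G : Finset (Finset ℕ)) (X Y : Finset ℕ) : ℕ :=
  (G.filter fun e => ∃ x ∈ X, ∃ y ∈ Y, e = {x, y}).card

/-- The graph `G` is `(δ,d)`-regular between `X` and `Y`. -/
def BipRegular (δ d : ℝ) (G : Finset (Finset ℕ)) (X Y : Finset ℕ) : Prop :=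
  ∀ X' ⊆ X, ∀ Y' ⊆ Y,
    |(e2 G X' Y' : ℝ) - d * X'.card * Y'.card| ≤ δ * X.card * Y.card

/-- `e_H(X,Y,Z)` : the number of edges of the 3-graph `E` meeting `X`, `Y` and `Z`. -/
noncomputable def e3 (E : Finset (Finset ℕ)) (X Y Z : Finset ℕ) : ℕ :=
  (E.filter fun e => ∃ x ∈ X, ∃ y ∈ Y, ∃ z ∈ Z, e = {x, y, z}).card

/-- The 3-graph `E` is `(δ,d)`-weakly-regular on `(X,Y,Z)`. -/
def WeakRegularWith (δ d : ℝ) (E : Finset (Finset ℕ)) (X Y Z : Finset ℕ) : Prop :=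
  ∀ X' ⊆ X, ∀ Y' ⊆ Y, ∀ Z' ⊆ Z,
    |(e3 E X' Y' Z' : ℝ) - d * X'.card * Y'.card * Z'.card| ≤
      δ * X.card * Y.card * Z.card

/-- The 3-graph `E` is `δ`-weakly-regular on `(X,Y,Z)`. -/
def WeakRegular (δ : ℝ) (E : Finset (Finset ℕ)) (X Y Z : Finset ℕ) : Prop :=
  WeakRegularWith δ ((e3 E X Y Z : ℝ) / (X.card * Y.card * Z.card)) E X Y Z

/-- The 3-graph `E` is `δ`-weakly-regular with respect to the vertex partition `V`. -/
def WeakRegWrt (δ : ℝ) (E : Finset (Finset ℕ)) {t : ℕ} (V : Fin t → Finset ℕ) : Prop :=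
  let bad : Finset (Fin t × Fin t × Fin t) :=
    Finset.univ.filter fun x =>
      x.1 < x.2.1 ∧ x.2.1 < x.2.2 ∧ ¬ WeakRegular δ E (V x.1) (V x.2.1) (V x.2.2)
  (bad.card : ℝ) ≤ δ * (t.choose 3)

/-- `K_3(G)` on parts `(X,Y,Z)` : the triangles of `G` with one vertex in each part,
as a set of vertex triples. -/
noncomputable def triSets (G : Finset (Finset ℕ)) (X Y Z : Finset ℕ) : Finset (Finset ℕ) :=
  ((X ×ˢ Y ×ˢ Z).filter fun p =>
      ({p.1, p.2.1} : Finset ℕ) ∈ G ∧ ({p.1, p.2.2} : Finset ℕ) ∈ G ∧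
        ({p.2.1, p.2.2} : Finset ℕ) ∈ G).image fun p => ({p.1, p.2.1, p.2.2} : Finset ℕ)

/-- The relative density `d(E|P)` of a 3-graph `E` with respect to the tripartite
graph `P` on parts `(X,Y,Z)`. -/
noncomputable def relDen (E P : Finset (Finset ℕ)) (X Y Z : Finset ℕ) : ℝ :=
  ((E ∩ triSets P X Y Z).card : ℝ) / ((triSets P X Y Z).card : ℝ)

/-- The 3-graph `E` is `(δ,d,r)`-regular with respect to the tripartite graph `P`
on parts `(X,Y,Z)`. -/
def StrongRegular (δ d : ℝ) (r : ℕ) (E P : Finset (Finset ℕ)) (X Y Z : Finset ℕ) : Prop :=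
  ∀ Q : Fin r → Finset (Finset ℕ), (∀ i, Q i ⊆ P) →
    δ * ((triSets P X Y Z).card : ℝ)
        ≤ (((Finset.univ : Finset (Fin r)).biUnion fun i => triSets (Q i) X Y Z).card : ℝ) →
    0 < δ * ((triSets P X Y Z).card : ℝ) →
    |((E ∩ ((Finset.univ : Finset (Fin r)).biUnion fun i => triSets (Q i) X Y Z)).card : ℝ)
        - d * (((Finset.univ : Finset (Fin r)).biUnion fun i => triSets (Q i) X Y Z).card : ℝ)|
      ≤ δ * ((triSets P X Y Z).card : ℝ)

/-- The triad `B^{ijk}_{αβγ}` of a family of bipartite graphs. -/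
def triadG {t ℓ : ℕ} (B : Fin t → Fin t → Fin ℓ → Finset (Finset ℕ))
    (i j k : Fin t) (α β γ : Fin ℓ) : Finset (Finset ℕ) :=
  B i j α ∪ B i k β ∪ B j k γ

/-- The 3-graph `E` is `(δ,r)`-regular with respect to the partition `B` of the
pairs crossing the vertex partition `V` of `[n]`. -/
def StrongRegWrtB (δ : ℝ) (r : ℕ) (E : Finset (Finset ℕ)) {t ℓ : ℕ}
    (V : Fin t → Finset ℕ) (B : Fin t → Fin t → Fin ℓ → Finset (Finset ℕ)) (n : ℕ) : Prop :=
  let bad : Finset ((Fin t × Fin t × Fin t) × Fin ℓ × Fin ℓ × Fin ℓ) :=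
    Finset.univ.filter fun x =>
      x.1.1 < x.1.2.1 ∧ x.1.2.1 < x.1.2.2 ∧
        ¬ StrongRegular δ
          (relDen E (triadG B x.1.1 x.1.2.1 x.1.2.2 x.2.1 x.2.2.1 x.2.2.2)
            (V x.1.1) (V x.1.2.1) (V x.1.2.2))
          r E (triadG B x.1.1 x.1.2.1 x.1.2.2 x.2.1 x.2.2.1 x.2.2.2)
          (V x.1.1) (V x.1.2.1) (V x.1.2.2)
  ((bad.biUnion fun x =>
      triSets (triadG B x.1.1 x.1.2.1 x.1.2.2 x.2.1 x.2.2.1 x.2.2.2)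
        (V x.1.1) (V x.1.2.1) (V x.1.2.2)).card : ℝ) ≤ δ * (n : ℝ) ^ 3

/-- The joint link graph `⋂_{j} L_H(x_j, P)` of a tuple `x`, supported on the
bipartite part of `P` between `Y` and `Z`. -/
noncomputable def jointLink (EH P : Finset (Finset ℕ)) (Y Z : Finset ℕ) {t : ℕ}
    (x : Fin t → ℕ) : Finset (Finset ℕ) :=
  P.filter fun e => (∃ y ∈ Y, ∃ z ∈ Z, e = {y, z}) ∧ ∀ j : Fin t, insert (x j) e ∈ EH

/-- The joint link graph `L_H(X) = ⋂_{x ∈ X} L_H(x)` of a set `X` of vertices of a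
3-graph on `[n]`. -/
noncomputable def jointLinkSet (n : ℕ) (E : Finset (Finset ℕ)) (X : Finset ℕ) :
    Finset (Finset ℕ) :=
  ((Finset.range n).powersetCard 2).filter fun q => ∀ x ∈ X, insert x q ∈ E

/-- The complete tripartite 3-graph on parts `V1`, `V2`, `V3`. -/
noncomputable def tripartiteEdges (V1 V2 V3 : Finset ℕ) : Finset (Finset ℕ) :=
  (V1 ×ˢ V2 ×ˢ V3).image fun p => ({p.1, p.2.1, p.2.2} : Finset ℕ)

/-- The minimum 1-degree `δ₁` of a 3-graph on `[n]`. -/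
noncomputable def minDeg1 (n : ℕ) (E : Finset (Finset ℕ)) : ℕ :=
  if h : ((Finset.range n).image fun v => (E.filter fun e => v ∈ e).card).Nonempty then
    ((Finset.range n).image fun v => (E.filter fun e => v ∈ e).card).min' h
  else 0

/-- `(cV, cE)` is a copy of the graph `(KV, KE)` (an isomorphic image). -/
def IsCopy2 (KV : Finset ℕ) (KE : Finset (Finset ℕ))
    (cV : Finset ℕ) (cE : Finset (Finset ℕ)) : Prop :=
  ∃ φ : ℕ → ℕ, Set.InjOn φ ↑KV ∧ cV = KV.image φ ∧ cE = KE.image fun e => e.image φ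

open Function

namespace Nat

theorem choose_two_succ (j : ℕ) : (j + 1).choose 2 = j.choose 2 + j := by
  rw [choose_succ_succ' j 1, choose_one_right, add_comm]

theorem choose_two_add_lt_choose_two_succ {i j : ℕ} (h : i < j) :
    j.choose 2 + i < (j + 1).choose 2 := by
  rw [choose_two_succ]
  omega

theorem choose_two_add_lt_choose_two {i j n : ℕ} (hij : i < j) (hjn : j < n) :
    j.choose 2 + i < n.choose 2 :=
  (choose_two_add_lt_choose_two_succ hij).trans_le (choose_le_choose 2 hjn)

theorem eq_and_eq_of_choose_two_add_eq {i j i' j' : ℕ} (hi : i < j) (hi' : i' < j')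
    (h : j.choose 2 + i = j'.choose 2 + i') : i = i' ∧ j = j' := by
  rcases lt_trichotomy j j' with hj | rfl | hj
  · exact absurd h (choose_two_add_lt_choose_two hi hj |>.trans_le (le_add_right _ _)).ne
  · omega
  · exact absurd h (choose_two_add_lt_choose_two hi' hj |>.trans_le (le_add_right _ _)).ne'

theorem exists_choose_two_add_eq {m n : ℕ} (h : m < n.choose 2) :
    ∃ i j, i < j ∧ j < n ∧ j.choose 2 + i = m := by
  induction n with
  | zero => simp at h
  | succ n ih =>
    rw [choose_two_succ] at h
    by_cases hm : m < n.choose 2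
    · obtain ⟨i, j, hij, hjn, rfl⟩ := ih hm
      exact ⟨i, j, hij, hjn.trans n.lt_succ_self, rfl⟩
    · exact ⟨m - n.choose 2, n, by omega, n.lt_succ_self, by omega⟩

end Nat

theorem Sym2.exists_eq_mk_of_lt {α : Type*} [LinearOrder α] {z : Sym2 α} (hz : ¬ z.IsDiag) :
    ∃ x y, x < y ∧ z = s(x, y) := by
  induction z using Sym2.ind with
  | h x y =>
    rcases lt_trichotomy x y with h | rfl | h
    · exact ⟨x, y, h, rfl⟩
    · exact absurd (Sym2.mk_isDiag_iff.2 rfl) hz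
    · exact ⟨y, x, h, Sym2.eq_swap⟩

structure IsLinCliqueEmbedding {α : Type*} (E : Finset (Finset ℕ)) (b : α → ℕ)
    (a : Sym2 α → ℕ) : Prop where
  injective_branch : Injective b
  injOn_apex : Set.InjOn a {z | ¬ z.IsDiag}
  branch_ne_apex : ∀ x z, ¬ z.IsDiag → b x ≠ a z
  mem_edges : ∀ x y, x ≠ y → ({b x, b y, a s(x, y)} : Finset ℕ) ∈ E

namespace IsLinCliqueEmbedding

variable {α β : Type*} {E : Finset (Finset ℕ)} {b : α → ℕ} {a : Sym2 α → ℕ}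

theorem comp (h : IsLinCliqueEmbedding E b a) {e : β → α} (he : Injective e) :
    IsLinCliqueEmbedding E (b ∘ e) (a ∘ Sym2.map e) where
  injective_branch := h.injective_branch.comp he
  injOn_apex _ hz _ hz' hzz' :=
    Sym2.map.injective he <| h.injOn_apex (mt (Sym2.isDiag_map he).1 hz)
      (mt (Sym2.isDiag_map he).1 hz') hzz'
  branch_ne_apex x _ hz := h.branch_ne_apex (e x) _ (mt (Sym2.isDiag_map he).1 hz)
  mem_edges x y hxy := h.mem_edges (e x) (e y) (he.ne hxy)

theorem image (h : IsLinCliqueEmbedding E b a) {φ : ℕ → ℕ} {S : Set ℕ} (hφ : Set.InjOn φ S)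
    (hb : ∀ x, b x ∈ S) (ha : ∀ z, ¬ z.IsDiag → a z ∈ S) :
    IsLinCliqueEmbedding (E.image (Finset.image φ)) (φ ∘ b) (φ ∘ a) where
  injective_branch x y hxy := h.injective_branch (hφ (hb x) (hb y) hxy)
  injOn_apex z hz z' hz' hzz' := h.injOn_apex hz hz' (hφ (ha z hz) (ha z' hz') hzz')
  branch_ne_apex x z hz hxz := h.branch_ne_apex x z hz (hφ (hb x) (ha z hz) hxz)
  mem_edges x y hxy := Finset.mem_image.2 ⟨_, h.mem_edges x y hxy, by simp [Finset.image_insert]⟩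

end IsLinCliqueEmbedding

def linCliqueApex (n : ℕ) : Sym2 (Fin n) → ℕ :=
  Sym2.lift ⟨fun i j => n + ((max (i : ℕ) j).choose 2 + min (i : ℕ) j),
    fun i j => by simp only [max_comm, min_comm]⟩

section linCliqueApex

variable {n : ℕ}

theorem linCliqueApex_mk_of_lt {i j : Fin n} (h : i < j) :
    linCliqueApex n s(i, j) = n + ((j : ℕ).choose 2 + i) := by
  have h' : (i : ℕ) < j := h
  simp [linCliqueApex, max_eq_right h'.le, min_eq_left h'.le]

theorem le_linCliqueApex (z : Sym2 (Fin n)) : n ≤ linCliqueApex n z := by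
  induction z using Sym2.ind with
  | h i j => simp [linCliqueApex]

theorem linCliqueApex_lt {z : Sym2 (Fin n)} (hz : ¬ z.IsDiag) :
    linCliqueApex n z < n + n.choose 2 := by
  obtain ⟨i, j, hij, rfl⟩ := Sym2.exists_eq_mk_of_lt hz
  rw [linCliqueApex_mk_of_lt hij]
  have := Nat.choose_two_add_lt_choose_two (show (i : ℕ) < j from hij) j.2
  omega

theorem linCliqueApex_injOn : Set.InjOn (linCliqueApex n) {z | ¬ z.IsDiag} := by
  intro z hz z' hz' h
  obtain ⟨i, j, hij, rfl⟩ := Sym2.exists_eq_mk_of_lt hz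
  obtain ⟨i', j', hij', rfl⟩ := Sym2.exists_eq_mk_of_lt hz'
  rw [linCliqueApex_mk_of_lt hij, linCliqueApex_mk_of_lt hij', add_right_inj] at h
  obtain ⟨hi, hj⟩ := Nat.eq_and_eq_of_choose_two_add_eq hij hij' h
  rw [Fin.ext hi, Fin.ext hj]

theorem exists_linCliqueApex_eq {v : ℕ} (h₁ : n ≤ v) (h₂ : v < n + n.choose 2) :
    ∃ z, ¬ z.IsDiag ∧ linCliqueApex n z = v := by
  obtain ⟨i, j, hij, hjn, hv⟩ := Nat.exists_choose_two_add_eq (show v - n < n.choose 2 by omega)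
  refine ⟨s(⟨i, hij.trans hjn⟩, ⟨j, hjn⟩), by simpa using hij.ne, ?_⟩
  rw [linCliqueApex_mk_of_lt (show (⟨i, _⟩ : Fin n) < ⟨j, hjn⟩ from hij)]
  dsimp only
  omega

end linCliqueApex

theorem mem_linClique_verts {n v : ℕ} : v ∈ (linClique n).verts ↔ v < n + n.choose 2 := by
  simp [linClique]

theorem mem_linClique_edges {n : ℕ} {e : Finset ℕ} :
    e ∈ (linClique n).edges ↔
      ∃ i j : Fin n, i < j ∧ e = {(i : ℕ), (j : ℕ), linCliqueApex n s(i, j)} := by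
  simp only [linClique, Finset.mem_image, Finset.mem_filter, Finset.mem_product,
    Finset.mem_range, Prod.exists]
  constructor
  · rintro ⟨i, j, ⟨⟨-, hj⟩, hij⟩, rfl⟩
    refine ⟨⟨i, hij.trans hj⟩, ⟨j, hj⟩, hij, ?_⟩
    rw [linCliqueApex_mk_of_lt (show (⟨i, _⟩ : Fin n) < ⟨j, hj⟩ from hij)]
  · rintro ⟨i, j, hij, rfl⟩
    exact ⟨i, j, ⟨⟨i.2, j.2⟩, hij⟩, by rw [linCliqueApex_mk_of_lt hij]⟩

theorem isLinCliqueEmbedding_linClique (n : ℕ) :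
    IsLinCliqueEmbedding (linClique n).edges (fun i : Fin n => (i : ℕ)) (linCliqueApex n) where
  injective_branch := Fin.val_injective
  injOn_apex := linCliqueApex_injOn
  branch_ne_apex x z _ := (x.2.trans_le (le_linCliqueApex z)).ne
  mem_edges x y hxy := by
    rcases hxy.lt_or_gt with h | h
    · exact mem_linClique_edges.2 ⟨x, y, h, rfl⟩
    · rw [Finset.insert_comm, Sym2.eq_swap]
      exact mem_linClique_edges.2 ⟨y, x, h, rfl⟩

theorem IsCopy3.exists_isLinCliqueEmbedding {n : ℕ} {cV : Finset ℕ} {cE : Finset (Finset ℕ)}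
    (h : IsCopy3 (linClique n) cV cE) :
    ∃ (b : Fin n → ℕ) (a : Sym2 (Fin n) → ℕ), IsLinCliqueEmbedding cE b a ∧
      (∀ x, b x ∈ cV) ∧ ∀ z, ¬ z.IsDiag → a z ∈ cV := by
  obtain ⟨φ, hφ, rfl, rfl⟩ := h
  have hb (x : Fin n) : (x : ℕ) ∈ (linClique n).verts := mem_linClique_verts.2 (by omega)
  have ha (z) (hz : ¬ z.IsDiag) : linCliqueApex n z ∈ (linClique n).verts :=
    mem_linClique_verts.2 (linCliqueApex_lt hz)
  exact ⟨_, _, (isLinCliqueEmbedding_linClique n).image hφ hb ha,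
    fun x => Finset.mem_image_of_mem φ (hb x), fun z hz => Finset.mem_image_of_mem φ (ha z hz)⟩

theorem IsCopy3.card_verts {F : H3} {cV : Finset ℕ} {cE : Finset (Finset ℕ)}
    (h : IsCopy3 F cV cE) : cV.card = F.verts.card := by
  obtain ⟨φ, hφ, rfl, -⟩ := h
  exact Finset.card_image_of_injOn hφ

namespace IsLinCliqueEmbedding

variable {α : Type*} {E : Finset (Finset ℕ)}

theorem containsCopy_linClique_fin {n : ℕ} {b : Fin n → ℕ} {a : Sym2 (Fin n) → ℕ}
    (h : IsLinCliqueEmbedding E b a) : ContainsCopy (linClique n) E := by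
  obtain ⟨φ, hφb, hφa⟩ : ∃ φ : ℕ → ℕ,
      (∀ x : Fin n, φ x = b x) ∧ ∀ z, ¬ z.IsDiag → φ (linCliqueApex n z) = a z := by
    let apex : {z : Sym2 (Fin n) // ¬ z.IsDiag} → ℕ := fun z => linCliqueApex n z
    refine ⟨Function.extend apex (fun z => a z) fun v => if hv : v < n then b ⟨v, hv⟩ else 0,
      fun x => ?_, fun z hz => linCliqueApex_injOn.injective.extend_apply _ _ ⟨z, hz⟩⟩
    rw [Function.extend_apply' _ _ _ ?_, dif_pos x.2]
    rintro ⟨z, hz⟩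
    exact (x.2.trans_le (le_linCliqueApex _)).ne' hz
  have hverts (v) (hv : v ∈ (linClique n).verts) :
      (∃ x : Fin n, v = x) ∨ ∃ z, ¬ z.IsDiag ∧ v = linCliqueApex n z := by
    rw [mem_linClique_verts] at hv
    by_cases hvn : v < n
    · exact Or.inl ⟨⟨v, hvn⟩, rfl⟩
    · obtain ⟨z, hz, rfl⟩ := exists_linCliqueApex_eq (not_lt.1 hvn) hv
      exact Or.inr ⟨z, hz, rfl⟩
  refine ⟨_, _, ⟨φ, ?_, rfl, rfl⟩, ?_⟩
  · intro u hu v hv huv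
    rcases hverts u hu with ⟨x, rfl⟩ | ⟨z, hz, rfl⟩ <;>
      rcases hverts v hv with ⟨y, rfl⟩ | ⟨z', hz', rfl⟩
    · rw [hφb, hφb] at huv
      rw [h.injective_branch huv]
    · rw [hφb, hφa z' hz'] at huv
      exact absurd huv (h.branch_ne_apex x z' hz')
    · rw [hφa z hz, hφb] at huv
      exact absurd huv.symm (h.branch_ne_apex y z hz)
    · rw [hφa z hz, hφa z' hz'] at huv
      rw [h.injOn_apex hz hz' huv]
  · intro e he
    obtain ⟨e₀, he₀, rfl⟩ := Finset.mem_image.1 he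
    obtain ⟨i, j, hij, rfl⟩ := mem_linClique_edges.1 he₀
    have hne : ¬ s(i, j).IsDiag := Sym2.mk_isDiag_iff.not.2 hij.ne
    rw [Finset.image_insert, Finset.image_insert, Finset.image_singleton, hφb, hφb, hφa _ hne]
    exact h.mem_edges i j hij.ne

theorem containsCopy_linClique [Fintype α] {b : α → ℕ} {a : Sym2 α → ℕ}
    (h : IsLinCliqueEmbedding E b a) : ContainsCopy (linClique (Fintype.card α)) E :=
  (h.comp (Fintype.equivFin α).symm.injective).containsCopy_linClique_fin

end IsLinCliqueEmbedding

theorem Sym2.exists_eq_map_mk_or_mk_of_lt {β α : Type*} [LinearOrder β] {z : Sym2 (β × α)}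
    (hz : ¬ z.IsDiag) :
    (∃ c, ∃ w : Sym2 α, ¬ w.IsDiag ∧ z = w.map (Prod.mk c)) ∨
      ∃ p q : β × α, p.1 < q.1 ∧ z = s(p, q) := by
  induction z using Sym2.ind with
  | h p q =>
    obtain ⟨c, x⟩ := p
    obtain ⟨d, y⟩ := q
    rcases lt_trichotomy c d with h | rfl | h
    · exact Or.inr ⟨_, _, h, rfl⟩
    · exact Or.inl ⟨c, s(x, y), by simpa using hz, rfl⟩
    · exact Or.inr ⟨_, _, h, Sym2.eq_swap⟩

theorem Fin.three_eq_of_neg_add_eq {c d c' d' : Fin 3} (h : c < d) (h' : c' < d')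
    (he : -(c + d) = -(c' + d')) : c = c' ∧ d = d' := by
  revert c d c' d'
  decide

theorem mem_tripartiteEdges_of_lt {V : Fin 3 → Finset ℕ} {c d : Fin 3} (hcd : c < d)
    {x y z : ℕ} (hx : x ∈ V c) (hy : y ∈ V d) (hz : z ∈ V (-(c + d))) :
    {x, y, z} ∈ tripartiteEdges (V 0) (V 1) (V 2) := by
  simp only [tripartiteEdges, Finset.mem_image, Finset.mem_product, Prod.exists]
  fin_cases c <;> fin_cases d <;> simp at hcd hx hy hz
  · exact ⟨x, y, z, ⟨hx, hy, hz⟩, rfl⟩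
  · exact ⟨x, z, y, ⟨hx, hz, hy⟩, by rw [Finset.pair_comm]⟩
  · exact ⟨z, x, y, ⟨hz, hx, hy⟩, by rw [Finset.insert_comm, Finset.pair_comm]⟩

/-- Apexes for `K̃` on `Fin 3 × α`: a pair inside part `c` uses the apex map `a c`; a pair across
parts `c < d` uses the fresh map `f` of the third part, which in `Fin 3` is `-(c + d)`. -/
def tripartiteApex {α : Type*} (a : Fin 3 → Sym2 α → ℕ) (f : Fin 3 → α × α → ℕ) :
    Sym2 (Fin 3 × α) → ℕ :=
  Sym2.lift ⟨fun p q => if p.1 = q.1 then a p.1 s(p.2, q.2)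
    else if p.1 < q.1 then f (-(p.1 + q.1)) (p.2, q.2) else f (-(p.1 + q.1)) (q.2, p.2),
    fun p q => by
      rcases lt_trichotomy p.1 q.1 with h | h | h
      · simp [h.ne, h.ne', h, not_lt.2 h.le, add_comm]
      · simp [h, Sym2.eq_swap]
      · simp [h.ne, h.ne', h, not_lt.2 h.le, add_comm]⟩

section tripartiteApex

variable {α : Type*} {a : Fin 3 → Sym2 α → ℕ} {f : Fin 3 → α × α → ℕ}

theorem tripartiteApex_map_mk (c : Fin 3) (w : Sym2 α) :
    tripartiteApex a f (w.map (Prod.mk c)) = a c w := by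
  induction w using Sym2.ind with
  | h x y => simp [tripartiteApex]

theorem tripartiteApex_mk_of_lt {p q : Fin 3 × α} (h : p.1 < q.1) :
    tripartiteApex a f s(p, q) = f (-(p.1 + q.1)) (p.2, q.2) := by
  simp [tripartiteApex, h.ne, h]

end tripartiteApex

theorem Pairwise.eq_of_mem_of_mem {ι β : Type*} {V : ι → Finset β}
    (hV : Pairwise (Disjoint on V)) {c d : ι} {v : β} (hc : v ∈ V c) (hd : v ∈ V d) : c = d :=
  by_contra fun hcd => Finset.disjoint_left.1 (hV hcd) hc hd

theorem tripartiteApex_injOn {α : Type*} {V U : Fin 3 → Finset ℕ} {a : Fin 3 → Sym2 α → ℕ}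
    {f : Fin 3 → α × α → ℕ} (hV : Pairwise (Disjoint on V)) (hUV : ∀ c, U c ⊆ V c)
    (ha : ∀ c, Set.InjOn (a c) {z | ¬ z.IsDiag}) (haU : ∀ c z, ¬ z.IsDiag → a c z ∈ U c)
    (hf : ∀ c, Injective (f c)) (hfV : ∀ c p, f c p ∈ V c \ U c) :
    Set.InjOn (tripartiteApex a f) {z | ¬ z.IsDiag} := by
  have hfU c p : f c p ∉ U c := (Finset.mem_sdiff.1 (hfV c p)).2
  have hfV c p : f c p ∈ V c := (Finset.mem_sdiff.1 (hfV c p)).1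
  have haV c z (hz : ¬ z.IsDiag) : a c z ∈ V c := hUV c (haU c z hz)
  intro z hz z' hz' h
  rcases Sym2.exists_eq_map_mk_or_mk_of_lt hz with ⟨c, w, hw, rfl⟩ | ⟨p, q, hpq, rfl⟩ <;>
    rcases Sym2.exists_eq_map_mk_or_mk_of_lt hz' with ⟨c', w', hw', rfl⟩ | ⟨p', q', hpq', rfl⟩ <;>
    simp only [tripartiteApex_map_mk, tripartiteApex_mk_of_lt, *] at h
  · obtain rfl := hV.eq_of_mem_of_mem (haV c w hw) (h ▸ haV c' w' hw')
    rw [ha c hw hw' h]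
  · have hU := haU c w hw
    rw [h, hV.eq_of_mem_of_mem (haV c w hw) (h ▸ hfV _ _)] at hU
    exact absurd hU (hfU _ _)
  · have hU := haU c' w' hw'
    rw [← h, hV.eq_of_mem_of_mem (haV c' w' hw') (h ▸ hfV _ _)] at hU
    exact absurd hU (hfU _ _)
  · have he := hV.eq_of_mem_of_mem (hfV _ _) (h ▸ hfV _ _)
    obtain ⟨h₁, h₂⟩ := Fin.three_eq_of_neg_add_eq hpq hpq' he.symm
    rw [← he] at h
    obtain ⟨h₃, h₄⟩ := Prod.mk.inj (hf _ h)
    rw [Prod.ext h₁ h₃, Prod.ext h₂ h₄]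

theorem isLinCliqueEmbedding_tripartite {α : Type*} {V U : Fin 3 → Finset ℕ}
    {E : Fin 3 → Finset (Finset ℕ)} {b : Fin 3 → α → ℕ} {a : Fin 3 → Sym2 α → ℕ}
    {f : Fin 3 → α × α → ℕ} (hV : Pairwise (Disjoint on V)) (hUV : ∀ c, U c ⊆ V c)
    (hemb : ∀ c, IsLinCliqueEmbedding (E c) (b c) (a c)) (hb : ∀ c x, b c x ∈ U c)
    (ha : ∀ c z, ¬ z.IsDiag → a c z ∈ U c) (hf : ∀ c, Injective (f c))
    (hfV : ∀ c p, f c p ∈ V c \ U c) :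
    IsLinCliqueEmbedding (tripartiteEdges (V 0) (V 1) (V 2) ∪ E 0 ∪ E 1 ∪ E 2)
      (fun p => b p.1 p.2) (tripartiteApex a f) := by
  have hbV c x : b c x ∈ V c := hUV c (hb c x)
  have hfV' c p : f c p ∈ V c := (Finset.mem_sdiff.1 (hfV c p)).1
  refine ⟨?_, tripartiteApex_injOn hV hUV (fun c => (hemb c).injOn_apex) ha hf hfV, ?_, ?_⟩
  · rintro ⟨c, x⟩ ⟨d, y⟩ (h : b c x = b d y)
    obtain rfl := hV.eq_of_mem_of_mem (hbV c x) (h ▸ hbV d y)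
    rw [(hemb c).injective_branch h]
  · rintro ⟨c, x⟩ z hz (h : b c x = _)
    rcases Sym2.exists_eq_map_mk_or_mk_of_lt hz with ⟨d, w, hw, rfl⟩ | ⟨p, q, hpq, rfl⟩
    · rw [tripartiteApex_map_mk] at h
      obtain rfl := hV.eq_of_mem_of_mem (hbV c x) (h ▸ hUV d (ha d w hw))
      exact (hemb c).branch_ne_apex x w hw h
    · rw [tripartiteApex_mk_of_lt hpq] at h
      have hU := hb c x
      rw [h, hV.eq_of_mem_of_mem (hbV c x) (h ▸ hfV' _ _)] at hU
      exact (Finset.mem_sdiff.1 (hfV _ _)).2 hU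
  · intro p q hpq
    wlog hle : p.1 ≤ q.1 generalizing p q
    · rw [Finset.insert_comm, Sym2.eq_swap]
      exact this q p hpq.symm (le_of_not_ge hle)
    rcases hle.lt_or_eq with hlt | heq
    · rw [tripartiteApex_mk_of_lt hlt]
      refine Finset.mem_union_left _ (Finset.mem_union_left _ (Finset.mem_union_left _ ?_))
      exact mem_tripartiteEdges_of_lt hlt (hbV _ _) (hbV _ _) (hfV' _ _)
    · obtain ⟨c, x⟩ := p
      obtain ⟨d, y⟩ := q
      obtain rfl : c = d := heq
      have hE := (hemb c).mem_edges x y fun h => hpq (h ▸ rfl)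
      rw [← Sym2.map_mk (Prod.mk c), tripartiteApex_map_mk]
      revert hE
      fin_cases c <;> simp +contextual

theorem card_linClique_verts (n : ℕ) : (linClique n).verts.card = vOf n := by
  simp [linClique, vOf]

theorem vOf_ceil_div_three_add_sq_le {t : ℕ} (ht : 2 ≤ t) :
    vOf ((t + 2) / 3) + ((t + 2) / 3) ^ 2 ≤ t ^ 2 := by
  obtain ⟨k, hk⟩ : ∃ k, (t + 2) / 3 = k + 1 := ⟨(t + 2) / 3 - 1, by omega⟩
  have h3 : 3 * (k + 1) ≤ t + 2 := by omega
  have := Nat.div_mul_le_self ((k + 1) * k) 2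
  rw [hk, vOf, Nat.choose_two_right, Nat.add_sub_cancel]
  nlinarith

theorem containsCopy_linClique_tripartiteEdges_union {r : ℕ} {V cV : Fin 3 → Finset ℕ}
    {cE : Fin 3 → Finset (Finset ℕ)} (hV : Pairwise (Disjoint on V))
    (hcopy : ∀ c, IsCopy3 (linClique r) (cV c) (cE c)) (hsub : ∀ c, cV c ⊆ V c)
    (hroom : ∀ c, vOf r + r ^ 2 ≤ (V c).card) :
    ContainsCopy (linClique (3 * r))
      (tripartiteEdges (V 0) (V 1) (V 2) ∪ cE 0 ∪ cE 1 ∪ cE 2) := by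
  choose b a hemb hb ha using fun c => (hcopy c).exists_isLinCliqueEmbedding
  have hfresh c : ∃ f : Fin r × Fin r → ℕ, Injective f ∧ ∀ p, f p ∈ V c \ cV c := by
    have hcard : Fintype.card (Fin r × Fin r) ≤ Fintype.card {x // x ∈ V c \ cV c} := by
      have := hroom c
      simp only [Fintype.card_prod, Fintype.card_fin, Fintype.card_coe,
        Finset.card_sdiff_of_subset (hsub c), (hcopy c).card_verts, card_linClique_verts, ← sq]
      omega
    obtain ⟨e⟩ := Embedding.nonempty_of_card_le hcard
    exact ⟨fun p => e p, Subtype.val_injective.comp e.injective, fun p => (e p).2⟩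
  choose f hf hfV using hfresh
  simpa using (isLinCliqueEmbedding_tripartite hV hsub hemb hb ha hf hfV).containsCopy_linClique

/-- A copy of `T^s` (`s = t²`) together with copies of `K̃_r`
(`r = ⌈t/3⌉`) inside each of its parts contains a copy of `K̃_{3r}`. -/
theorem linear_clique_in_tripartite_union (t : ℕ) (ht : 4 ≤ t)
    (V1 V2 V3 : Finset ℕ)
    (hd12 : Disjoint V1 V2) (hd13 : Disjoint V1 V3) (hd23 : Disjoint V2 V3)
    (hc1 : V1.card = t ^ 2) (hc2 : V2.card = t ^ 2) (hc3 : V3.card = t ^ 2)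
    (cV1 cV2 cV3 : Finset ℕ) (cE1 cE2 cE3 : Finset (Finset ℕ))
    (h1 : IsCopy3 (linClique ((t + 2) / 3)) cV1 cE1) (hs1 : cV1 ⊆ V1)
    (h2 : IsCopy3 (linClique ((t + 2) / 3)) cV2 cE2) (hs2 : cV2 ⊆ V2)
    (h3 : IsCopy3 (linClique ((t + 2) / 3)) cV3 cE3) (hs3 : cV3 ⊆ V3) :
    ContainsCopy (linClique (3 * ((t + 2) / 3)))
      (tripartiteEdges V1 V2 V3 ∪ cE1 ∪ cE2 ∪ cE3) := by
  have hroom := vOf_ceil_div_three_add_sq_le (by omega : 2 ≤ t)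
  have hV : Pairwise (Disjoint on ![V1, V2, V3]) := by
    intro c d hcd
    fin_cases c <;> fin_cases d <;>
      simp [onFun, hd12, hd13, hd23, hd12.symm, hd13.symm, hd23.symm] at hcd ⊢
  simpa using containsCopy_linClique_tripartiteEdges_union (cV := ![cV1, cV2, cV3])
    (cE := ![cE1, cE2, cE3]) hV (by simp [Fin.forall_fin_succ, h1, h2, h3])
    (by simp [Fin.forall_fin_succ, hs1, hs2, hs3])
    (by simp [Fin.forall_fin_succ, hc1, hc2, hc3, hroom])
end

section
/- For every integer t ≥ 3, the linear 3-clique K̃_t is strictly balanced with respect to the maximal 3-density, i.e. every proper subhypergraph F ⊊ K̃_t satisfies m_3(F) < m_3(K̃_t), and moreover M_t = m_3(K̃_t) = (t² − t − 2)/(t² + t − 6) = 1 − (2t − 4)/(t² + t − 6) < 1. -/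
open Finset Filter

attribute [local instance] Classical.propDecidable

noncomputable def lcPairs (t : ℕ) : Finset (ℕ × ℕ) :=
  (Finset.range t ×ˢ Finset.range t).filter fun p => p.1 < p.2

def lcEdge (t : ℕ) (p : ℕ × ℕ) : Finset ℕ := {p.1, p.2, t + (p.2.choose 2 + p.1)}

lemma linClique_edges (t : ℕ) : (linClique t).edges = (lcPairs t).image (lcEdge t) := rfl

lemma mem_lcPairs {t : ℕ} {p : ℕ × ℕ} : p ∈ lcPairs t ↔ p.1 < p.2 ∧ p.2 < t := by
  simp only [lcPairs, Finset.mem_filter, Finset.mem_product, Finset.mem_range]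
  constructor
  · rintro ⟨⟨h1, h2⟩, h3⟩; exact ⟨h3, h2⟩
  · rintro ⟨h1, h2⟩; exact ⟨⟨h1.trans h2, h2⟩, h1⟩

lemma choose_succ_two (j : ℕ) : (j + 1).choose 2 = j.choose 2 + j := by
  exact (Nat.choose_succ_succ j 1).trans (by rw [Nat.choose_one_right]; exact Nat.add_comm _ _)

lemma apex_lt_choose {i j t : ℕ} (hij : i < j) (hj : j < t) :
    j.choose 2 + i < t.choose 2 := by
  have h1 : j.choose 2 + i < (j + 1).choose 2 := by rw [choose_succ_two]; omega
  exact h1.trans_le (Nat.choose_le_choose 2 hj)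

lemma apex_inj {i j i' j' : ℕ} (hij : i < j) (hij' : i' < j')
    (h : j.choose 2 + i = j'.choose 2 + i') : i = i' ∧ j = j' := by
  rcases lt_trichotomy j j' with hlt | heq | hgt
  · have := apex_lt_choose hij hlt; omega
  · subst heq; omega
  · have := apex_lt_choose hij' hgt; omega

lemma apex_surj {t k : ℕ} (hk : k < t.choose 2) :
    ∃ i j, i < j ∧ j < t ∧ j.choose 2 + i = k := by
  classical
  set j := Nat.findGreatest (fun j => j.choose 2 ≤ k) t with hjdef
  have hspec : j.choose 2 ≤ k :=
    Nat.findGreatest_spec (P := fun j => j.choose 2 ≤ k) (Nat.zero_le t) (by simp)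
  have hjt : j ≤ t := Nat.findGreatest_le t
  have hjlt : j < t := by
    rcases Nat.lt_or_ge j t with h | h
    · exact h
    · have : j = t := le_antisymm hjt h
      rw [this] at hspec; omega
  have hnext : ¬ (j + 1).choose 2 ≤ k :=
    Nat.findGreatest_is_greatest (P := fun j => j.choose 2 ≤ k) (Nat.lt_succ_self j) hjlt
  rw [choose_succ_two] at hnext
  exact ⟨k - j.choose 2, j, by omega, hjlt, by omega⟩

lemma lcEdge_injOn (t : ℕ) : Set.InjOn (lcEdge t) ↑(lcPairs t) := by
  intro p hp q hq h
  rw [Finset.mem_coe, mem_lcPairs] at hp hq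
  have hmem : t + (p.2.choose 2 + p.1) ∈ lcEdge t q := by
    rw [← h]; simp [lcEdge]
  simp only [lcEdge, Finset.mem_insert, Finset.mem_singleton] at hmem
  have hq1 : q.1 < t := hq.1.trans hq.2
  have hap : p.2.choose 2 + p.1 = q.2.choose 2 + q.1 := by omega
  obtain ⟨h1, h2⟩ := apex_inj hp.1 hq.1 hap
  exact Prod.ext h1 h2

lemma card_lcPairs (t : ℕ) : (lcPairs t).card = t.choose 2 := by
  have hinj : Set.InjOn (fun p : ℕ × ℕ => p.2.choose 2 + p.1) ↑(lcPairs t) := by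
    intro p hp q hq h
    rw [Finset.mem_coe, mem_lcPairs] at hp hq
    obtain ⟨h1, h2⟩ := apex_inj hp.1 hq.1 h
    exact Prod.ext h1 h2
  have himg : (lcPairs t).image (fun p : ℕ × ℕ => p.2.choose 2 + p.1)
      = Finset.range (t.choose 2) := by
    apply Finset.Subset.antisymm
    · intro k hk
      simp only [Finset.mem_image] at hk
      obtain ⟨p, hp, rfl⟩ := hk
      rw [mem_lcPairs] at hp
      exact Finset.mem_range.mpr (apex_lt_choose hp.1 hp.2)
    · intro k hk
      rw [Finset.mem_range] at hk
      obtain ⟨i, j, hij, hjt, hk'⟩ := apex_surj hk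
      exact Finset.mem_image.mpr ⟨(i, j), mem_lcPairs.mpr ⟨hij, hjt⟩, hk'⟩
  calc (lcPairs t).card = ((lcPairs t).image _).card := (Finset.card_image_of_injOn hinj).symm
    _ = t.choose 2 := by rw [himg, Finset.card_range]

lemma card_linClique_edges (t : ℕ) : (linClique t).edges.card = t.choose 2 := by
  rw [linClique_edges, Finset.card_image_of_injOn (lcEdge_injOn t), card_lcPairs]

lemma lcEdge_subset_verts {t : ℕ} {p : ℕ × ℕ} (hp : p ∈ lcPairs t) :
    lcEdge t p ⊆ (linClique t).verts := by
  rw [mem_lcPairs] at hp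
  have hap : p.2.choose 2 + p.1 < t.choose 2 := apex_lt_choose hp.1 hp.2
  intro x hx
  simp only [lcEdge, Finset.mem_insert, Finset.mem_singleton] at hx
  simp only [linClique, Finset.mem_range]
  rcases hx with rfl | rfl | rfl <;> omega

lemma linClique_sub_self (t : ℕ) : (linClique t).Sub (linClique t) := by
  refine ⟨subset_rfl, subset_rfl, ?_⟩
  intro e he
  rw [linClique_edges, Finset.mem_image] at he
  obtain ⟨p, hp, rfl⟩ := he
  exact lcEdge_subset_verts hp

lemma three_le_choose {t : ℕ} (ht : 3 ≤ t) : 3 ≤ t.choose 2 := by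
  calc 3 = Nat.choose 3 2 := by decide
    _ ≤ t.choose 2 := Nat.choose_le_choose 2 ht

lemma denom_pos {t : ℕ} (ht : 3 ≤ t) : (0:ℝ) < (t:ℝ)^2 + t - 6 := by
  have : (3:ℝ) ≤ t := by exact_mod_cast ht
  nlinarith

lemma numer_pos {t : ℕ} (ht : 3 ≤ t) : (0:ℝ) < (t:ℝ)^2 - t - 2 := by
  have : (3:ℝ) ≤ t := by exact_mod_cast ht
  nlinarith

lemma d3_linClique (t : ℕ) (ht : 3 ≤ t) :
    d3 (linClique t) = ((t:ℝ)^2 - t - 2) / ((t:ℝ)^2 + t - 6) := by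
  have hC := three_le_choose ht
  have hcard := card_linClique_edges t
  have hv : (linClique t).verts.card = t + t.choose 2 := Finset.card_range _
  rw [d3, if_neg (by omega), if_neg (by omega), hcard, hv]
  have ht' : (3:ℝ) ≤ t := by exact_mod_cast ht
  have hch : ((t.choose 2 : ℕ) : ℝ) = t * ((t:ℝ) - 1) / 2 := Nat.cast_choose_two (K := ℝ) t
  rw [div_eq_div_iff (by push_cast; rw [hch]; nlinarith) (denom_pos ht).ne']
  push_cast
  rw [hch]
  ring

lemma d3_lt_M (t : ℕ) (ht : 3 ≤ t) (F : H3) (hsub : F.Sub (linClique t))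
    (hne : F ≠ linClique t) :
    d3 F < ((t:ℝ)^2 - t - 2) / ((t:ℝ)^2 + t - 6) := by
  classical
  obtain ⟨hV, hE, hEV⟩ := hsub
  have ht' : (3:ℝ) ≤ t := by exact_mod_cast ht
  set Q := (lcPairs t).filter (fun p => lcEdge t p ∈ F.edges) with hQdef
  have hQsub : Q ⊆ lcPairs t := Finset.filter_subset _ _
  have hQE : Q.image (lcEdge t) = F.edges := by
    apply Finset.Subset.antisymm
    · intro e he
      rw [Finset.mem_image] at he
      obtain ⟨p, hp, rfl⟩ := he
      exact (Finset.mem_filter.mp hp).2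
    · intro e he
      have : e ∈ (lcPairs t).image (lcEdge t) := by rw [← linClique_edges]; exact hE he
      rw [Finset.mem_image] at this
      obtain ⟨p, hp, rfl⟩ := this
      exact Finset.mem_image.mpr ⟨p, Finset.mem_filter.mpr ⟨hp, he⟩, rfl⟩
  have hm : Q.card = F.edges.card := by
    rw [← hQE, Finset.card_image_of_injOn ((lcEdge_injOn t).mono (by exact_mod_cast hQsub))]
  -- edges of F are subsets of F.verts
  have hQV : ∀ p ∈ Q, lcEdge t p ⊆ F.verts := by
    intro p hp
    exact hEV _ (Finset.mem_filter.mp hp).2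
  rcases Nat.lt_or_ge F.edges.card 2 with hsmall | hbig
  · -- 0 or 1 edge
    have hMbig : 1/3 < ((t:ℝ)^2 - t - 2) / ((t:ℝ)^2 + t - 6) := by
      rw [div_lt_div_iff₀ (by norm_num) (denom_pos ht)]
      nlinarith
    interval_cases h : F.edges.card
    · rw [d3, if_pos h]
      exact lt_trans (by norm_num) hMbig
    · rw [d3]
      rw [if_neg (by omega)]
      by_cases hv3 : F.verts.card = 3
      · rw [if_pos ⟨h, hv3⟩]; exact hMbig
      · rw [if_neg (by tauto), h]
        simpa using lt_trans (by norm_num : (0:ℝ) < 1/3) hMbig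
  · -- at least 2 edges
    set B := Q.image Prod.fst ∪ Q.image Prod.snd with hBdef
    have hBlt : ∀ b ∈ B, b < t := by
      intro b hb
      simp only [hBdef, Finset.mem_union, Finset.mem_image] at hb
      rcases hb with ⟨p, hp, rfl⟩ | ⟨p, hp, rfl⟩ <;>
        · have := mem_lcPairs.mp (hQsub hp); omega
    have hst : B.card ≤ t := by
      have : B ⊆ Finset.range t := fun b hb => Finset.mem_range.mpr (hBlt b hb)
      simpa using Finset.card_le_card this
    have hBV : B ⊆ F.verts := by
      intro b hb
      simp only [hBdef, Finset.mem_union, Finset.mem_image] at hb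
      rcases hb with ⟨p, hp, rfl⟩ | ⟨p, hp, rfl⟩
      · exact hQV p hp (by simp [lcEdge])
      · exact hQV p hp (by simp [lcEdge])
    set A := Q.image (fun p : ℕ × ℕ => t + (p.2.choose 2 + p.1)) with hAdef
    have hAcard : A.card = Q.card := by
      apply Finset.card_image_of_injOn
      intro p hp q hq h
      have hp' := mem_lcPairs.mp (hQsub hp)
      have hq' := mem_lcPairs.mp (hQsub hq)
      have h' : t + (p.2.choose 2 + p.1) = t + (q.2.choose 2 + q.1) := h
      obtain ⟨h1, h2⟩ := apex_inj hp'.1 hq'.1 (by omega)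
      exact Prod.ext h1 h2
    have hAV : A ⊆ F.verts := by
      intro a ha
      simp only [hAdef, Finset.mem_image] at ha
      obtain ⟨p, hp, rfl⟩ := ha
      exact hQV p hp (by simp [lcEdge])
    have hdisj : Disjoint A B := by
      rw [Finset.disjoint_left]
      intro a ha hb
      have := hBlt a hb
      simp only [hAdef, Finset.mem_image] at ha
      obtain ⟨p, hp, rfl⟩ := ha
      have h' : (fun p : ℕ × ℕ => t + (p.2.choose 2 + p.1)) p = t + (p.2.choose 2 + p.1) := rfl
      omega
    have hv_ge : Q.card + B.card ≤ F.verts.card := by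
      calc Q.card + B.card = A.card + B.card := by rw [hAcard]
        _ = (A ∪ B).card := (Finset.card_union_of_disjoint hdisj).symm
        _ ≤ F.verts.card := Finset.card_le_card (Finset.union_subset hAV hBV)
    have hQB : Q.card ≤ B.card.choose 2 := by
      have hinj : Set.InjOn (fun p : ℕ × ℕ => ({p.1, p.2} : Finset ℕ)) ↑Q := by
        intro p hp q hq h
        have hp' := mem_lcPairs.mp (hQsub hp)
        have hq' := mem_lcPairs.mp (hQsub hq)
        have h' : ({p.1, p.2} : Finset ℕ) = ({q.1, q.2} : Finset ℕ) := h
        have h1 : p.1 ∈ ({q.1, q.2} : Finset ℕ) := by rw [← h']; simp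
        have h2 : p.2 ∈ ({q.1, q.2} : Finset ℕ) := by rw [← h']; simp
        have h3 : q.1 ∈ ({p.1, p.2} : Finset ℕ) := by rw [h']; simp
        simp only [Finset.mem_insert, Finset.mem_singleton] at h1 h2 h3
        have : p.1 = q.1 ∧ p.2 = q.2 := by omega
        exact Prod.ext this.1 this.2
      have himg : Q.image (fun p : ℕ × ℕ => ({p.1, p.2} : Finset ℕ)) ⊆ B.powersetCard 2 := by
        intro e he
        rw [Finset.mem_image] at he
        obtain ⟨p, hp, rfl⟩ := he
        have hp' := mem_lcPairs.mp (hQsub hp)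
        rw [Finset.mem_powersetCard]
        constructor
        · intro x hx
          simp only [Finset.mem_insert, Finset.mem_singleton] at hx
          rcases hx with rfl | rfl
          · exact Finset.mem_union_left _ (Finset.mem_image.mpr ⟨p, hp, rfl⟩)
          · exact Finset.mem_union_right _ (Finset.mem_image.mpr ⟨p, hp, rfl⟩)
        · rw [Finset.card_insert_of_notMem (by simp; omega), Finset.card_singleton]
      calc Q.card = (Q.image _).card := (Finset.card_image_of_injOn hinj).symm
        _ ≤ (B.powersetCard 2).card := Finset.card_le_card himg
        _ = B.card.choose 2 := by rw [Finset.card_powersetCard]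
    have hmC : F.edges.card < t.choose 2 := by
      rcases Nat.lt_or_ge F.edges.card (t.choose 2) with h | h
      · exact h
      · exfalso
        have hEeq : F.edges = (linClique t).edges :=
          Finset.eq_of_subset_of_card_le hE (by rw [card_linClique_edges]; exact h)
        apply hne
        have hVeq : F.verts = (linClique t).verts := by
          apply Finset.Subset.antisymm hV
          intro v hv
          simp only [linClique, Finset.mem_range] at hv
          rcases Nat.lt_or_ge v t with hvt | hvt
          · rcases Nat.eq_zero_or_pos v with rfl | hpos
            · have hp : (0, 1) ∈ lcPairs t := mem_lcPairs.mpr ⟨by omega, by omega⟩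
              have : lcEdge t (0,1) ∈ F.edges := by
                rw [hEeq, linClique_edges]
                exact Finset.mem_image.mpr ⟨_, hp, rfl⟩
              exact hEV _ this (by simp [lcEdge])
            · have hp : (0, v) ∈ lcPairs t := mem_lcPairs.mpr ⟨hpos, hvt⟩
              have : lcEdge t (0,v) ∈ F.edges := by
                rw [hEeq, linClique_edges]
                exact Finset.mem_image.mpr ⟨_, hp, rfl⟩
              exact hEV _ this (by simp [lcEdge])
          · obtain ⟨i, j, hij, hjt, hk⟩ := apex_surj (show v - t < t.choose 2 by omega)
            have hp : (i, j) ∈ lcPairs t := mem_lcPairs.mpr ⟨hij, hjt⟩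
            have hmem : lcEdge t (i,j) ∈ F.edges := by
              rw [hEeq, linClique_edges]
              exact Finset.mem_image.mpr ⟨_, hp, rfl⟩
            have : v = t + (j.choose 2 + i) := by omega
            rw [this]
            exact hEV _ hmem (by simp [lcEdge])
        cases F
        simp_all [linClique]
    have hs3 : 3 ≤ B.card := by
      obtain ⟨q, hq, q', hq', hqq'⟩ := Finset.one_lt_card.mp (by omega : 1 < Q.card)
      by_contra hcon
      push_neg at hcon
      have hq1 := mem_lcPairs.mp (hQsub hq)
      have hq1' := mem_lcPairs.mp (hQsub hq')
      have hsub2 : ({q.1, q.2} : Finset ℕ) ⊆ B := by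
        intro x hx
        simp only [Finset.mem_insert, Finset.mem_singleton] at hx
        rcases hx with rfl | rfl
        · exact Finset.mem_union_left _ (Finset.mem_image.mpr ⟨q, hq, rfl⟩)
        · exact Finset.mem_union_right _ (Finset.mem_image.mpr ⟨q, hq, rfl⟩)
      have hcard2 : ({q.1, q.2} : Finset ℕ).card = 2 := by
        rw [Finset.card_insert_of_notMem (by simp; omega), Finset.card_singleton]
      have hBeq : ({q.1, q.2} : Finset ℕ) = B :=
        Finset.eq_of_subset_of_card_le hsub2 (by omega)
      have h1 : q'.1 ∈ ({q.1, q.2} : Finset ℕ) := by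
        rw [hBeq]; exact Finset.mem_union_left _ (Finset.mem_image.mpr ⟨q', hq', rfl⟩)
      have h2 : q'.2 ∈ ({q.1, q.2} : Finset ℕ) := by
        rw [hBeq]; exact Finset.mem_union_right _ (Finset.mem_image.mpr ⟨q', hq', rfl⟩)
      simp only [Finset.mem_insert, Finset.mem_singleton] at h1 h2
      apply hqq'
      have : q.1 = q'.1 ∧ q.2 = q'.2 := by omega
      exact Prod.ext this.1 this.2
    -- now the arithmetic
    set m := F.edges.card with hmdef
    set s := B.card with hsdef
    set v := F.verts.card with hvdef
    have hv5 : 5 ≤ v := by omega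
    rw [d3, if_neg (by omega), if_neg (by omega)]
    have hvpos : (0:ℝ) < (v:ℝ) - 3 := by
      have : (5:ℝ) ≤ v := by exact_mod_cast hv5
      linarith
    rw [div_lt_div_iff₀ hvpos (denom_pos ht)]
    have c1 : (m:ℝ) ≤ (s:ℝ) * ((s:ℝ) - 1) / 2 := by
      have : ((m:ℕ):ℝ) ≤ ((s.choose 2 : ℕ):ℝ) := by exact_mod_cast (hm ▸ hQB)
      rwa [Nat.cast_choose_two] at this
    have c2 : (m:ℝ) + 1 ≤ (t:ℝ) * ((t:ℝ) - 1) / 2 := by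
      have h' : ((m + 1 : ℕ):ℝ) ≤ ((t.choose 2 : ℕ):ℝ) := by exact_mod_cast hmC
      rw [Nat.cast_choose_two] at h'
      push_cast at h'
      linarith
    have c3 : (m:ℝ) + (s:ℝ) ≤ (v:ℝ) := by exact_mod_cast (hm ▸ hv_ge)
    have c4 : (s:ℝ) ≤ (t:ℝ) := by exact_mod_cast hst
    have c5 : (3:ℝ) ≤ (s:ℝ) := by exact_mod_cast hs3
    have c7 : (2:ℝ) ≤ (m:ℝ) := by exact_mod_cast hbig
    have key : 2 * (m:ℝ) < (s:ℝ) * t + s - 2 * t := by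
      rcases eq_or_lt_of_le hst with h | h
      · have hseq : (s:ℝ) = (t:ℝ) := by exact_mod_cast h
        rw [hseq]
        nlinarith [c2]
      · have h' : (s:ℝ) + 1 ≤ (t:ℝ) := by exact_mod_cast h
        nlinarith [c1, mul_nonneg (by linarith : (0:ℝ) ≤ (s:ℝ) - 2) (by linarith : (0:ℝ) ≤ (t:ℝ) - s - 1)]
    have step1 : ((m:ℝ) - 1) * ((t:ℝ) + 3) < ((t:ℝ) + 1) * ((m:ℝ) + (s:ℝ) - 3) := by
      nlinarith [key]
    have hstep2 : ((m:ℝ)-1)*((t:ℝ)+3) * ((t:ℝ)-2) < ((t:ℝ)+1)*((m:ℝ)+(s:ℝ)-3)*((t:ℝ)-2) :=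
      mul_lt_mul_of_pos_right step1 (by linarith)
    have hstep3 : ((t:ℝ)+1)*((m:ℝ)+(s:ℝ)-3)*((t:ℝ)-2) ≤ ((t:ℝ)+1)*((v:ℝ)-3)*((t:ℝ)-2) := by
      apply mul_le_mul_of_nonneg_right _ (by linarith)
      apply mul_le_mul_of_nonneg_left (by linarith) (by linarith)
    calc ((m:ℝ)-1) * ((t:ℝ)^2+(t:ℝ)-6) = ((m:ℝ)-1)*((t:ℝ)+3)*((t:ℝ)-2) := by ring
      _ < ((t:ℝ)+1)*((m:ℝ)+(s:ℝ)-3)*((t:ℝ)-2) := hstep2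
      _ ≤ ((t:ℝ)+1)*((v:ℝ)-3)*((t:ℝ)-2) := hstep3
      _ = ((t:ℝ)^2-(t:ℝ)-2)*((v:ℝ)-3) := by ring

lemma H3.ext' (F G : H3) (h1 : F.verts = G.verts) (h2 : F.edges = G.edges) : F = G := by
  cases F; cases G; cases h1; cases h2; rfl

lemma m3_set_finite (F : H3) :
    {x : ℝ | ∃ G : H3, G.Sub F ∧ x = d3 G}.Finite := by
  apply Set.Finite.subset (Finset.finite_toSet ((F.verts.powerset ×ˢ F.edges.powerset).image
    fun p => d3 ⟨p.1, p.2⟩))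
  rintro x ⟨G, ⟨hV, hE, _⟩, rfl⟩
  simp only [Finset.coe_image, Set.mem_image, Finset.mem_coe, Finset.mem_product,
    Finset.mem_powerset]
  exact ⟨(G.verts, G.edges), ⟨hV, hE⟩, rfl⟩

lemma m3_set_nonempty (F : H3) : {x : ℝ | ∃ G : H3, G.Sub F ∧ x = d3 G}.Nonempty :=
  ⟨d3 ⟨∅, ∅⟩, ⟨∅, ∅⟩, ⟨Finset.empty_subset _, Finset.empty_subset _, by simp⟩, rfl⟩

lemma m3_linClique (t : ℕ) (ht : 3 ≤ t) :
    m3 (linClique t) = ((t:ℝ)^2 - t - 2) / ((t:ℝ)^2 + t - 6) := by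
  rw [m3]
  apply IsGreatest.csSup_eq
  constructor
  · exact ⟨linClique t, linClique_sub_self t, (d3_linClique t ht).symm⟩
  · rintro x ⟨G, hG, rfl⟩
    by_cases h : G = linClique t
    · subst h; exact le_of_eq (d3_linClique t ht)
    · exact (d3_lt_M t ht G hG h).le

lemma m3_lt_M (t : ℕ) (ht : 3 ≤ t) (F : H3) (hsub : F.Sub (linClique t))
    (hne : F ≠ linClique t) :
    m3 F < ((t:ℝ)^2 - t - 2) / ((t:ℝ)^2 + t - 6) := by
  rw [m3]
  obtain ⟨G, hG, heq⟩ := (m3_set_nonempty F).csSup_mem (m3_set_finite F)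
  rw [heq]
  obtain ⟨hv1, he1, hev1⟩ := hG
  obtain ⟨hv2, he2, hev2⟩ := hsub
  apply d3_lt_M t ht G ⟨hv1.trans hv2, he1.trans he2, hev1⟩
  rintro rfl
  exact hne (H3.ext' F (linClique t) (Finset.Subset.antisymm hv2 hv1)
    (Finset.Subset.antisymm he2 he1))

theorem linClique_strictly_balanced' (t : ℕ) (ht : 3 ≤ t) :
    (∀ F : H3, F.Sub (linClique t) → F ≠ linClique t → m3 F < m3 (linClique t)) ∧
    m3 (linClique t) = ((t : ℝ) ^ 2 - t - 2) / ((t : ℝ) ^ 2 + t - 6) ∧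
    m3 (linClique t) = 1 - (2 * (t : ℝ) - 4) / ((t : ℝ) ^ 2 + t - 6) ∧
    m3 (linClique t) < 1 := by
  have hM := m3_linClique t ht
  have hD := denom_pos ht
  have ht' : (3:ℝ) ≤ t := by exact_mod_cast ht
  refine ⟨fun F hsub hne => ?_, hM, ?_, ?_⟩
  · rw [hM]; exact m3_lt_M t ht F hsub hne
  · rw [hM, eq_sub_iff_add_eq, ← add_div, div_eq_one_iff_eq hD.ne']
    ring
  · rw [hM, div_lt_one hD]
    linarith


/-- `K̃_t` is strictly balanced with respect to the maximal
3-density and `M_t = (t²-t-2)/(t²+t-6) = 1 - (2t-4)/(t²+t-6) < 1`. -/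
theorem linClique_strictly_balanced (t : ℕ) (ht : 3 ≤ t) :
    (∀ F : H3, F.Sub (linClique t) → F ≠ linClique t → m3 F < m3 (linClique t)) ∧
    m3 (linClique t) = ((t : ℝ) ^ 2 - t - 2) / ((t : ℝ) ^ 2 + t - 6) ∧
    m3 (linClique t) = 1 - (2 * (t : ℝ) - 4) / ((t : ℝ) ^ 2 + t - 6) ∧
    m3 (linClique t) < 1 :=
  linClique_strictly_balanced' t ht
end
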